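/- arXiv:1808.02610 — 6 statements merged into one kernel-verified Lean document; each statement's English description precedes it below -/
import Mathlib

section
/- For every positive integer n and every pair of non-negative integers s, t with s ≥ t, the following combinatorial identity holds: ∑_{j=0}^{n} (n choose j) / ((n+s) choose (j+t)) = (s + 1 + n) / ((s+1) · (s choose t)). -/
/-!
Writing `S n` for the left-hand side, Pascal's rule on `(n+1).choose j` splits `S (n+1)` into
terms `n.choose j * (1 / C(m+1, k) + 1 / C(m+1, k+1))` with `m = n + s`, `k = j + t`, and this
bracket equals `(m+2) / ((m+1) * C(m, k))`. Hence `S (n+1) = (n+s+2)/(n+s+1) * S n`, and the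
product telescopes from `S 0 = 1 / C(s, t)`.
-/

open Finset

variable {K : Type*} [Field K] [CharZero K]

theorem Nat.inv_choose_succ_add_inv_choose_succ_succ {m k : ℕ} (hk : k ≤ m) :
    ((m + 1).choose k : K)⁻¹ + ((m + 1).choose (k + 1) : K)⁻¹
      = ((m : K) + 2) / (((m : K) + 1) * (m.choose k : K)) := by
  have hlow : (m.choose k : K) * (m + 1) = (m + 1).choose k * ((m : K) + 1 - k) := by
    have h := congrArg (Nat.cast : ℕ → K) (Nat.choose_mul_succ_eq m k)
    push_cast [Nat.cast_sub (by omega : k ≤ m + 1)] at h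
    exact h
  have hhigh : ((m : K) + 1) * m.choose k = (m + 1).choose (k + 1) * ((k : K) + 1) := by
    exact_mod_cast Nat.add_one_mul_choose_eq m k
  have hchoose : (m.choose k : K) ≠ 0 := Nat.cast_ne_zero.mpr (Nat.choose_pos hk).ne'
  have hlow_ne : ((m + 1).choose k : K) ≠ 0 := Nat.cast_ne_zero.mpr (Nat.choose_pos (by omega)).ne'
  have hhigh_ne : ((m + 1).choose (k + 1) : K) ≠ 0 :=
    Nat.cast_ne_zero.mpr (Nat.choose_pos (by omega)).ne'
  field_simp
  linear_combination ((m + 1).choose k : K) * hhigh + ((m + 1).choose (k + 1) : K) * hlow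

theorem sum_choose_div_choose_add_succ (n s t : ℕ) (hst : t ≤ s) :
    ∑ j ∈ range (n + 2), ((n + 1).choose j : K) / ((n + 1 + s).choose (j + t) : K)
      = ((n : K) + s + 2) / ((n : K) + s + 1)
          * ∑ j ∈ range (n + 1), (n.choose j : K) / ((n + s).choose (j + t) : K) := by
  simp_rw [div_eq_mul_inv]
  rw [sum_choose_succ_mul (fun i _ ↦ ((n + 1 + s).choose (i + t) : K)⁻¹) n, ← sum_add_distrib,
    mul_sum]
  refine sum_congr rfl fun j hj ↦ ?_
  have hj : j + t ≤ n + s := by rw [mem_range] at hj; omega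
  rw [← mul_add, show n + 1 + s = n + s + 1 by omega, show j + 1 + t = j + t + 1 by omega,
    Nat.inv_choose_succ_add_inv_choose_succ_succ hj]
  push_cast
  field_simp

theorem combinatorial_equality_general (n s t : ℕ) (hst : t ≤ s) :
    ∑ j ∈ Finset.range (n + 1),
        (n.choose j : ℚ) / ((n + s).choose (j + t) : ℚ)
      = ((s : ℚ) + 1 + (n : ℚ)) / (((s : ℚ) + 1) * (s.choose t : ℚ)) := by
  have hchoose : (s.choose t : ℚ) ≠ 0 := Nat.cast_ne_zero.mpr (Nat.choose_pos hst).ne'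
  induction n with
  | zero =>
    simp only [zero_add, sum_range_one, Nat.choose_zero_right, Nat.cast_one, CharP.cast_eq_zero,
      add_zero]
    field_simp
  | succ n ih =>
    rw [sum_choose_div_choose_add_succ n s t hst, ih]
    push_cast
    field_simp
    ring

/-- Lemma 1 of the paper (a combinatorial equality): for every positive integer `n`
and non-negative integers `s ≥ t`,
`∑_{j=0}^{n} (n choose j) / ((n+s) choose (j+t)) = (s + 1 + n) / ((s+1) * (s choose t))`. -/
theorem combinatorial_equality (n s t : ℕ) (hn : 0 < n) (hst : t ≤ s) :
    ∑ j ∈ Finset.range (n + 1),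
        (n.choose j : ℚ) / ((n + s).choose (j + t) : ℚ)
      = ((s : ℚ) + 1 + (n : ℚ)) / (((s : ℚ) + 1) * (s.choose t : ℚ)) :=
  combinatorial_equality_general n s t hst
end

section
/- Let d ≥ 1 be an integer, let S be a nonempty subset of {1,…,d}, and let U be a nonempty subset of S. Then ∑_{A ⊆ {1,…,d}, A ∩ S = U} 1/((d−1) choose (|A|−1)) = (d/|S|) · 1/((|S|−1) choose (|U|−1)). Equivalently, writing u = |U|, s = |S|: ∑_{j=0}^{d−s} ((d−s) choose j) / ((d−1) choose (u+j−1)) = d / (s · ((s−1) choose (u−1))). -/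
/-!
Every `A` with `A ∩ S = U` is `U ∪ V` for a unique `V ⊆ Sᶜ`, so with `m = d - |S|`,
`u = a + 1` and `|S| = a + b + 1` the sum is `∑ₖ C(m, k) / C(m + a + b, k + a)`.
Writing out factorials, the `k`-th term is `a! b! m! / (m + a + b)!` times
`C(k + a, k) · C(m - k + b, m - k)`, and these products sum to `C(m + a + b + 1, m)`: this is
Chu–Vandermonde at the negative integers `-(a + 1)` and `-(b + 1)`.
-/

open Finset Nat

theorem Ring.choose_neg_natCast_succ (a k : ℕ) :
    Ring.choose (-((a + 1 : ℕ) : ℤ)) k = Int.negOnePow k • ((k + a).choose k : ℤ) := by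
  rw [Ring.choose_neg, show ((a + 1 : ℕ) : ℤ) + k - 1 = ((k + a : ℕ) : ℤ) by push_cast; ring,
    Ring.choose_natCast]

theorem Nat.sum_antidiagonal_add_choose_mul_add_choose (a b m : ℕ) :
    ∑ ij ∈ antidiagonal m, (ij.1 + a).choose ij.1 * (ij.2 + b).choose ij.2
      = (m + (a + b + 1)).choose m := by
  have h := Ring.add_choose_eq m (Commute.all (-((a + 1 : ℕ) : ℤ)) (-((b + 1 : ℕ) : ℤ)))
  rw [show -((a + 1 : ℕ) : ℤ) + -((b + 1 : ℕ) : ℤ) = -((a + b + 1 + 1 : ℕ) : ℤ) by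
      push_cast; ring,
    Ring.choose_neg_natCast_succ] at h
  simp only [Ring.choose_neg_natCast_succ, smul_mul_smul_comm, ← Int.negOnePow_add,
    ← Nat.cast_add] at h
  rw [sum_congr rfl fun ij hij => by rw [mem_antidiagonal.mp hij], ← smul_sum,
    smul_left_cancel_iff] at h
  exact_mod_cast h.symm

section Field

variable {K : Type*} [Field K] [CharZero K]

theorem Nat.cast_choose_div_choose_add_add (a b i j : ℕ) :
    ((i + j).choose i : K) / ((i + a) + (j + b)).choose (i + a)
      = (i + a).choose i * (j + b).choose j * (a ! * b ! * (i + j)! / ((i + a) + (j + b))!) := by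
  simp only [cast_add_choose]
  field_simp [factorial_ne_zero]

theorem Nat.sum_range_cast_choose_div_choose_add (a b m : ℕ) :
    ∑ k ∈ range (m + 1), (m.choose k : K) / (m + a + b).choose (k + a)
      = (m + a + b + 1) / ((a + b + 1) * (a + b).choose a) := by
  rw [← Finset.Nat.sum_antidiagonal_eq_sum_range_succ
    (fun i _ => (m.choose i : K) / (m + a + b).choose (i + a))]
  have hterm : ∀ ij ∈ antidiagonal m, (m.choose ij.1 : K) / (m + a + b).choose (ij.1 + a)
      = ((ij.1 + a).choose ij.1 * (ij.2 + b).choose ij.2 : ℕ)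
        * (a ! * b ! * m ! / (m + a + b)! : K) := by
    rintro ⟨i, j⟩ hij
    obtain rfl : i + j = m := mem_antidiagonal.mp hij
    rw [show i + j + a + b = (i + a) + (j + b) by ring, cast_choose_div_choose_add_add, cast_mul]
  rw [sum_congr rfl hterm, ← sum_mul, ← cast_sum, sum_antidiagonal_add_choose_mul_add_choose,
    cast_add_choose, cast_add_choose, show m + (a + b + 1) = m + a + b + 1 by ring,
    factorial_succ, factorial_succ (a + b)]
  push_cast
  field_simp [factorial_ne_zero]

end Field

section Fintype

variable {α M : Type*} [Fintype α] [DecidableEq α] [AddCommMonoid M]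

theorem Finset.sum_filter_inter_eq {S U : Finset α} (hUS : U ⊆ S) (f : Finset α → M) :
    ∑ A with A ∩ S = U, f A = ∑ V ∈ Sᶜ.powerset, f (U ∪ V) := by
  refine (sum_nbij' (fun V => U ∪ V) (fun A => A \ S) ?_ ?_ ?_ ?_ fun _ _ => rfl).symm
  · intro V hV
    have hVS : Disjoint V S := subset_compl_iff_disjoint_right.1 (mem_powerset.1 hV)
    simp [union_inter_distrib_right, inter_eq_left.2 hUS, disjoint_iff_inter_eq_empty.1 hVS]
  · exact fun A _ => mem_powerset.2 fun x hx => mem_compl.2 (mem_sdiff.1 hx).2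
  · intro V hV
    have hVS : Disjoint V S := subset_compl_iff_disjoint_right.1 (mem_powerset.1 hV)
    rw [union_sdiff_distrib, sdiff_eq_empty_iff_subset.2 hUS, empty_union,
      sdiff_eq_self_of_disjoint hVS]
  · intro A hA
    rw [← (mem_filter_univ _).1 hA]
    exact sup_inf_sdiff A S

theorem Finset.sum_filter_inter_eq_apply_card {S U : Finset α} (hUS : U ⊆ S) (f : ℕ → M) :
    ∑ A with A ∩ S = U, f #A = ∑ k ∈ range (#Sᶜ + 1), (#Sᶜ).choose k • f (#U + k) := by
  rw [sum_filter_inter_eq hUS, ← sum_powerset_apply_card (fun k => f (#U + k))]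
  refine sum_congr rfl fun V hV => ?_
  rw [card_union_of_disjoint]
  exact disjoint_of_subset_left hUS (subset_compl_iff_disjoint_left.1 (mem_powerset.1 hV))

end Fintype

theorem shapley_weight_partition_general {d : ℕ}
    (S U : Finset (Fin d)) (hU : U.Nonempty) (hUS : U ⊆ S) :
    ∑ A : Finset (Fin d),
        (if A ∩ S = U then (1 : ℚ) / ((d - 1).choose (A.card - 1) : ℚ) else 0)
      = ((d : ℚ) / (S.card : ℚ)) *
          (1 / ((S.card - 1).choose (U.card - 1) : ℚ)) := by
  obtain ⟨a, hu⟩ : ∃ a, #U = a + 1 := exists_eq_add_one_of_ne_zero hU.card_ne_zero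
  obtain ⟨b, hs⟩ : ∃ b, #S = a + b + 1 := ⟨#S - #U, by have := card_le_card hUS; omega⟩
  obtain ⟨m, hsc⟩ : ∃ m, #Sᶜ = m := ⟨_, rfl⟩
  have hd : d = m + a + b + 1 := by
    rw [← Fintype.card_fin d, ← card_add_card_compl S, hs, hsc]; ring
  rw [← sum_filter, sum_filter_inter_eq_apply_card hUS (fun k => 1 / ((d - 1).choose (k - 1) : ℚ)),
    hsc, hu, hs, hd]
  simp only [nsmul_eq_mul, mul_one_div, show ∀ k, a + 1 + k - 1 = k + a by omega,
    show m + a + b + 1 - 1 = m + a + b by omega, show a + b + 1 - 1 = a + b by omega,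
    show a + 1 - 1 = a by omega]
  rw [sum_range_cast_choose_div_choose_add, div_div]
  push_cast
  ring

/-- Partitioning identity for Shapley weights: for a nonempty subset `S` of `{1,…,d}`
and a nonempty `U ⊆ S`,
`∑_{A ⊆ [d], A ∩ S = U} 1 / ((d−1) choose (|A|−1)) = (d/|S|) · 1/((|S|−1) choose (|U|−1))`. -/
theorem shapley_weight_partition {d : ℕ} (hd : 1 ≤ d)
    (S U : Finset (Fin d)) (hS : S.Nonempty) (hU : U.Nonempty) (hUS : U ⊆ S) :
    ∑ A : Finset (Fin d),
        (if A ∩ S = U then (1 : ℚ) / ((d - 1).choose (A.card - 1) : ℚ) else 0)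
      = ((d : ℚ) / (S.card : ℚ)) *
          (1 / ((S.card - 1).choose (U.card - 1) : ℚ)) :=
  shapley_weight_partition_general S U hU hUS
end

section
/- Let d and u be integers with u ≥ 1 and d ≥ u + 3. Then ∑_{j=0}^{d−u−2} ((d−u−2) choose j) / ((d−1) choose (j+u−1)) = 2d / ((u+2)(u+1)u). -/
/-!
Pascal's rule applied to the numerator `n.choose j`, together with the identity
`1 / C(N+1, k) + 1 / C(N+1, k+1) = (N+2)/(N+1) · 1 / C(N, k)`, shows that raising `n` by one
multiplies `∑ⱼ C(n, j) / C(n+s, j+t)` by `(n+s+2)/(n+s+1)`. The product telescopes from the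
value `1 / C(s, t)` at `n = 0` to `(n+s+1) / ((s+1) C(s, t))`; the theorem is the case
`n = d-u-2`, `s = u+1`, `t = u-1`, where `C(u+1, u-1) = (u+1)u/2`.
-/

open Finset

namespace Nat

variable {K : Type*} [Field K] [CharZero K]

theorem inv_choose_succ_add_inv_choose_succ_succ_s3 {N k : ℕ} (hk : k ≤ N) :
    ((N + 1).choose k : K)⁻¹ + ((N + 1).choose (k + 1) : K)⁻¹
      = (N + 2) / (N + 1) * (N.choose k : K)⁻¹ := by
  obtain ⟨m, rfl⟩ := Nat.exists_eq_add_of_le hk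
  rw [show k + m + 1 = k + (m + 1) by ring, cast_add_choose,
    show k + (m + 1) = k + 1 + m by ring, cast_add_choose, cast_add_choose,
    show k + 1 + m = k + m + 1 by ring]
  simp only [factorial_succ]
  push_cast
  field_simp
  ring

theorem sum_choose_div_choose_add_succ {s t : ℕ} (ht : t ≤ s) (n : ℕ) :
    ∑ j ∈ range (n + 2), ((n + 1).choose j : K) / ((n + 1 + s).choose (j + t))
      = (n + s + 2) / (n + s + 1) *
          ∑ j ∈ range (n + 1), (n.choose j : K) / ((n + s).choose (j + t)) := by
  simp only [div_eq_mul_inv]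
  rw [sum_choose_succ_mul (fun j _ => ((n + 1 + s).choose (j + t) : K)⁻¹) n,
    ← sum_add_distrib, mul_sum]
  refine sum_congr rfl fun j hj => ?_
  have hjt : j + t ≤ n + s := by
    have := mem_range.mp hj
    omega
  rw [← mul_add, show n + 1 + s = n + s + 1 by ring, show j + 1 + t = j + t + 1 by ring,
    inv_choose_succ_add_inv_choose_succ_succ_s3 hjt]
  push_cast
  ring

theorem sum_choose_div_choose_add {s t : ℕ} (ht : t ≤ s) (n : ℕ) :
    ∑ j ∈ range (n + 1), (n.choose j : K) / ((n + s).choose (j + t))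
      = (n + s + 1) / ((s + 1) * s.choose t) := by
  have hst : (s.choose t : K) ≠ 0 := cast_ne_zero.mpr (choose_pos ht).ne'
  induction n with
  | zero =>
    simp only [zero_add, range_one, sum_singleton, choose_zero_right, cast_one, cast_zero]
    field_simp
  | succ n ih =>
    have hns : (n + s + 1 : K) ≠ 0 := by exact_mod_cast (n + s).succ_ne_zero
    rw [sum_choose_div_choose_add_succ ht n, ih]
    field_simp
    push_cast
    ring

end Nat

/-- Specialization of the combinatorial equality giving the C-Shapley weights:
for integers `u ≥ 1` and `d ≥ u + 3`,
`∑_{j=0}^{d−u−2} ((d−u−2) choose j) / ((d−1) choose (j+u−1)) = 2d / ((u+2)(u+1)u)`. -/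
theorem cshapley_weight_identity (d u : ℕ) (hu : 1 ≤ u) (hd : u + 3 ≤ d) :
    ∑ j ∈ Finset.range (d - u - 2 + 1),
        ((d - u - 2).choose j : ℚ) / ((d - 1).choose (j + u - 1) : ℚ)
      = 2 * (d : ℚ) / (((u : ℚ) + 2) * ((u : ℚ) + 1) * (u : ℚ)) := by
  obtain ⟨v, rfl⟩ : ∃ v, u = v + 1 := ⟨u - 1, by omega⟩
  obtain ⟨n, rfl⟩ : ∃ n, d = n + (v + 2) + 1 := ⟨d - v - 3, by omega⟩
  have hn : n + (v + 2) + 1 - (v + 1) - 2 = n := by omega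
  have hd1 : n + (v + 2) + 1 - 1 = n + (v + 2) := by omega
  have hj : ∀ j, j + (v + 1) - 1 = j + v := fun j => by omega
  simp only [hn, hd1, hj, Nat.sum_choose_div_choose_add (by omega : v ≤ v + 2) n]
  have hchoose : ((v + 2).choose v : ℚ) = (v + 2) * (v + 1) / 2 := by
    rw [Nat.choose_symm_of_eq_add rfl, Nat.cast_choose_two]
    push_cast
    ring
  rw [hchoose]
  push_cast
  field_simp
  ring
end

section
/- Let p be a strictly positive joint probability mass function of random variables (X_1, …, X_d, Y), where each X_j takes values in a finite type 𝒳_j and Y takes values in a finite type 𝒴. Fix a point x ∈ ∏_j 𝒳_j, an index i ∈ {1,…,d}, a subset U ⊆ {1,…,d} with i ∈ U, and a subset V ⊆ {1,…,d} disjoint from U. Then for every y ∈ 𝒴: log( p(y | x_{U∪V}) / p(y | x_{(U∪V)\{i}}) ) − log( p(y | x_U) / p(y | x_{U\{i}}) ) = log( p(x_i, x_V | x_{U\{i}}, y) / ( p(x_i | x_{U\{i}}, y) · p(x_V | x_{U\{i}}, y) ) ) − log( p(x_i, x_V | x_{U\{i}}) / ( p(x_i | x_{U\{i}}) · p(x_V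 | x_{U\{i}}) ) ). -/
/-!
Since `p(y | x_S) = p(y, x_S) / p(x_S)` and every marginal of a positive `p` is positive,
each side splits into the logarithm of the interaction ratio
`p(x_{U∪V}) p(x_{U∖i}) / (p(x_U) p(x_{(U∪V)∖i}))` of the joint marginals `p(y, ·)` minus that of
the marginals `p(·)`. On the right this needs `{i} ∪ V ∪ U∖i = U ∪ V`, `{i} ∪ U∖i = U` and
`V ∪ U∖i = (U ∪ V)∖i`, the last one because `i ∉ V`.
-/


open scoped Classical BigOperators

variable {d : ℕ} {𝒳 : Fin d → Type*} [∀ j, Fintype (𝒳 j)] {𝒴 : Type*} [Fintype 𝒴]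

/-- The joint marginal probability `p(x_S, y)` of `(X_S, Y)` at the restriction of `x` to `S`. -/
noncomputable def margXY (p : (∀ j, 𝒳 j) → 𝒴 → ℝ) (S : Finset (Fin d))
    (x : ∀ j, 𝒳 j) (y : 𝒴) : ℝ :=
  ∑ x' : ∀ j, 𝒳 j, if ∀ j ∈ S, x' j = x j then p x' y else 0

/-- The marginal probability `p(x_S)` of `X_S` at the restriction of `x` to `S`. -/
noncomputable def margX (p : (∀ j, 𝒳 j) → 𝒴 → ℝ) (S : Finset (Fin d))
    (x : ∀ j, 𝒳 j) : ℝ :=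
  ∑ y, margXY p S x y

/-- The marginal probability `p(x)` of the full feature vector `X`. -/
noncomputable def pX (p : (∀ j, 𝒳 j) → 𝒴 → ℝ) (x : ∀ j, 𝒳 j) : ℝ :=
  ∑ y, p x y

/-- The conditional probability `p(y | x_S) = p(y, x_S) / p(x_S)`
(for `S = ∅` this is `p(y)` when `p` sums to one). -/
noncomputable def condY (p : (∀ j, 𝒳 j) → 𝒴 → ℝ) (S : Finset (Fin d))
    (x : ∀ j, 𝒳 j) (y : 𝒴) : ℝ :=
  margXY p S x y / margX p S x

/-- The importance score `v_x(S) = ∑_y p(y | x) log p(y | x_S)`. -/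
noncomputable def impScore (p : (∀ j, 𝒳 j) → 𝒴 → ℝ) (x : ∀ j, 𝒳 j)
    (S : Finset (Fin d)) : ℝ :=
  ∑ y, condY p Finset.univ x y * Real.log (condY p S x y)

/-- The marginal contribution `m_x(S, i) = v_x(S) − v_x(S \ {i})`. -/
noncomputable def margContrib (p : (∀ j, 𝒳 j) → 𝒴 → ℝ) (x : ∀ j, 𝒳 j)
    (S : Finset (Fin d)) (i : Fin d) : ℝ :=
  impScore p x S - impScore p x (S.erase i)

/-- The Shapley value `φ_x(i)`. -/
noncomputable def shapley (p : (∀ j, 𝒳 j) → 𝒴 → ℝ) (x : ∀ j, 𝒳 j) (i : Fin d) : ℝ :=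
  (1 / (d : ℝ)) * ∑ A : Finset (Fin d),
    if i ∈ A then margContrib p x A i / ((d - 1).choose (A.card - 1) : ℝ) else 0

/-- The restricted Shapley estimate `φ̂^S_x(i)` over a feature subset `S` containing `i`. -/
noncomputable def shapleyRes (p : (∀ j, 𝒳 j) → 𝒴 → ℝ) (x : ∀ j, 𝒳 j)
    (S : Finset (Fin d)) (i : Fin d) : ℝ :=
  (1 / (S.card : ℝ)) * ∑ T ∈ S.powerset,
    if i ∈ T then margContrib p x T i / ((S.card - 1).choose (T.card - 1) : ℝ) else 0

/-- The absolute conditional mutual information `I_a(X_A; X_B | X_C)`. -/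
noncomputable def IaX (p : (∀ j, 𝒳 j) → 𝒴 → ℝ) (A B C : Finset (Fin d)) : ℝ :=
  ∑ x : ∀ j, 𝒳 j, pX p x *
    |Real.log ((margX p (A ∪ B ∪ C) x * margX p C x) /
      (margX p (A ∪ C) x * margX p (B ∪ C) x))|

/-- The absolute conditional mutual information `I_a(X_A; X_B | X_C, Y)`. -/
noncomputable def IaXY (p : (∀ j, 𝒳 j) → 𝒴 → ℝ) (A B C : Finset (Fin d)) : ℝ :=
  ∑ x : ∀ j, 𝒳 j, ∑ y, p x y *
    |Real.log ((margXY p (A ∪ B ∪ C) x y * margXY p C x y) /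
      (margXY p (A ∪ C) x y * margXY p (B ∪ C) x y))|

omit [Fintype 𝒴] in
lemma margXY_pos (p : (∀ j, 𝒳 j) → 𝒴 → ℝ) (hpos : ∀ x y, 0 < p x y)
    (S : Finset (Fin d)) (x : ∀ j, 𝒳 j) (y : 𝒴) : 0 < margXY p S x y :=
  Finset.sum_pos' (fun x' _ => by split_ifs <;> simp [(hpos x' y).le])
    ⟨x, Finset.mem_univ x, by simpa using hpos x y⟩

lemma margX_pos [Nonempty 𝒴] (p : (∀ j, 𝒳 j) → 𝒴 → ℝ) (hpos : ∀ x y, 0 < p x y)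
    (S : Finset (Fin d)) (x : ∀ j, 𝒳 j) : 0 < margX p S x :=
  Finset.sum_pos (fun y _ => margXY_pos p hpos S x y) Finset.univ_nonempty

namespace Finset

variable {α : Type*} [DecidableEq α] {a : α} {s t : Finset α}

lemma singleton_union_erase_of_mem (h : a ∈ s) : {a} ∪ s.erase a = s := by
  rw [← insert_eq, insert_erase h]

lemma singleton_union_union_erase_of_mem (h : a ∈ s) :
    {a} ∪ t ∪ s.erase a = s ∪ t := by
  rw [union_right_comm, singleton_union_erase_of_mem h]

lemma union_erase_eq_erase_union_of_notMem (h : a ∉ t) :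
    t ∪ s.erase a = (s ∪ t).erase a := by
  rw [erase_union_distrib, erase_eq_of_notMem h, union_comm]

end Finset

lemma div_div_mul_div_eq_div_div {K : Type*} [Field K] {a b c e : K} (he : e ≠ 0) :
    (a / e) / ((b / e) * (c / e)) = (a / c) / (b / e) := by
  field_simp

lemma Real.log_div_div_div {a b c e : ℝ} (ha : 0 < a) (hb : 0 < b) (hc : 0 < c) (he : 0 < e) :
    Real.log ((a / b) / (c / e)) = Real.log a - Real.log b - (Real.log c - Real.log e) := by
  rw [Real.log_div (div_pos ha hb).ne' (div_pos hc he).ne', Real.log_div ha.ne' hb.ne',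
    Real.log_div hc.ne' he.ne']

theorem log_ratio_identity_general (p : (∀ j, 𝒳 j) → 𝒴 → ℝ)
    (hpos : ∀ x y, 0 < p x y)
    (x : ∀ j, 𝒳 j) (i : Fin d) (U V : Finset (Fin d))
    (hiU : i ∈ U) (hUV : Disjoint U V) (y : 𝒴) :
    Real.log (condY p (U ∪ V) x y / condY p ((U ∪ V).erase i) x y)
      - Real.log (condY p U x y / condY p (U.erase i) x y)
    = Real.log ((margXY p ({i} ∪ V ∪ U.erase i) x y / margXY p (U.erase i) x y) /
          ((margXY p ({i} ∪ U.erase i) x y / margXY p (U.erase i) x y) *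
            (margXY p (V ∪ U.erase i) x y / margXY p (U.erase i) x y)))
      - Real.log ((margX p ({i} ∪ V ∪ U.erase i) x / margX p (U.erase i) x) /
          ((margX p ({i} ∪ U.erase i) x / margX p (U.erase i) x) *
            (margX p (V ∪ U.erase i) x / margX p (U.erase i) x))) := by
  have : Nonempty 𝒴 := ⟨y⟩
  have hiV : i ∉ V := Finset.disjoint_left.mp hUV hiU
  have hXY := margXY_pos p hpos
  have hX := margX_pos p hpos
  rw [Finset.singleton_union_union_erase_of_mem hiU, Finset.singleton_union_erase_of_mem hiU,
    Finset.union_erase_eq_erase_union_of_notMem hiV,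
    div_div_mul_div_eq_div_div (hXY _ x y).ne', div_div_mul_div_eq_div_div (hX _ x).ne']
  simp only [condY]
  rw [Real.log_div_div_div (hXY _ x y) (hX _ x) (hXY _ x y) (hX _ x),
    Real.log_div_div_div (hXY _ x y) (hX _ x) (hXY _ x y) (hX _ x),
    Real.log_div_div_div (hXY _ x y) (hXY _ x y) (hXY _ x y) (hXY _ x y),
    Real.log_div_div_div (hX _ x) (hX _ x) (hX _ x) (hX _ x)]
  ring

/-- The pointwise log-ratio identity: for a strictly positive joint pmf `p`, a point `x`,
an index `i ∈ U`, and `V` disjoint from `U`, for every `y`,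
`log(p(y|x_{U∪V})/p(y|x_{(U∪V)\{i}})) − log(p(y|x_U)/p(y|x_{U\{i}}))`
equals the difference of the conditional pointwise-mutual-information terms. -/
theorem log_ratio_identity (p : (∀ j, 𝒳 j) → 𝒴 → ℝ)
    (hpos : ∀ x y, 0 < p x y)
    (hsum : ∑ x : ∀ j, 𝒳 j, ∑ y, p x y = 1)
    (x : ∀ j, 𝒳 j) (i : Fin d) (U V : Finset (Fin d))
    (hiU : i ∈ U) (hUV : Disjoint U V) (y : 𝒴) :
    Real.log (condY p (U ∪ V) x y / condY p ((U ∪ V).erase i) x y)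
      - Real.log (condY p U x y / condY p (U.erase i) x y)
    = Real.log ((margXY p ({i} ∪ V ∪ U.erase i) x y / margXY p (U.erase i) x y) /
          ((margXY p ({i} ∪ U.erase i) x y / margXY p (U.erase i) x y) *
            (margXY p (V ∪ U.erase i) x y / margXY p (U.erase i) x y)))
      - Real.log ((margX p ({i} ∪ V ∪ U.erase i) x / margX p (U.erase i) x) /
          ((margX p ({i} ∪ U.erase i) x / margX p (U.erase i) x) *
            (margX p (V ∪ U.erase i) x / margX p (U.erase i) x))) :=
  log_ratio_identity_general p hpos x i U V hiU hUV y
end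

section
/- (Exactness case of Theorem 1.) Let p be a strictly positive joint probability mass function of random variables (X_1, …, X_d, Y) on finite types, fix i ∈ {1,…,d} and a subset S ⊆ {1,…,d} with i ∈ S. Suppose that for every T ⊆ S \ {i}, the variable X_i is conditionally independent of X_{{1,…,d} \ S} given X_T, and also conditionally independent of X_{{1,…,d} \ S} given (X_T, Y). Then for every x in the support of the marginal of X, the restricted Shapley estimate equals the Shapley value: φ̂^S_x(i) = φ_x(i). -/
open scoped Classical BigOperators

variable {d : ℕ} {𝒳 : Fin d → Type*} [∀ j, Fintype (𝒳 j)] {𝒴 : Type*} [Fintype 𝒴]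

/-!
Conditional independence of `X_i` from the features outside `S` survives when the outside set
shrinks to any `W`, so the ratio `p(y | x_{{i} ∪ W ∪ T}) / p(y | x_{W ∪ T})` does not depend on `W`:
the marginal contribution of `i` to a coalition `A` only depends on `A ∩ S`. Grouping the
coalitions of the Shapley sum by their trace `T = A ∩ S`, the weights of the coalitions with the
same trace add up to the Shapley weight of `T` in the game on `S`, by the recursion
`w(n+1, j) + w(n+1, j+1) = w(n, j)` of the weight `w(n, j) = 1 / (n C(n-1, j))`.
-/

open Finset
open scoped Nat

/-- The Shapley weight of a coalition of `j + 1` players among `n`. -/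
noncomputable def shapleyWeight (n j : ℕ) : ℝ := 1 / (n * (n - 1).choose j)

theorem shapleyWeight_eq_factorial (j r : ℕ) :
    shapleyWeight (j + r + 1) j = j ! * r ! / (j + r + 1)! := by
  rw [shapleyWeight, Nat.add_sub_cancel, Nat.cast_add_choose, Nat.factorial_succ]
  push_cast
  field_simp

theorem shapleyWeight_succ_add_shapleyWeight_succ {n j : ℕ} (hj : j < n) :
    shapleyWeight (n + 1) j + shapleyWeight (n + 1) (j + 1) = shapleyWeight n j := by
  obtain ⟨r, rfl⟩ : ∃ r, n = j + r + 1 := ⟨n - j - 1, by omega⟩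
  rw [show j + r + 1 + 1 = j + (r + 1) + 1 by ring, shapleyWeight_eq_factorial,
    show j + (r + 1) + 1 = j + 1 + r + 1 by ring, shapleyWeight_eq_factorial,
    shapleyWeight_eq_factorial]
  simp only [Nat.factorial_succ, show j + 1 + r = j + r + 1 by ring]
  push_cast
  field_simp
  ring

theorem sum_powerset_union {α M : Type*} [DecidableEq α] [AddCommMonoid M] {s t : Finset α}
    (h : Disjoint s t) (f : Finset α → M) :
    ∑ A ∈ (s ∪ t).powerset, f A = ∑ T ∈ s.powerset, ∑ W ∈ t.powerset, f (T ∪ W) := by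
  induction t using Finset.induction_on generalizing f with
  | empty => simp
  | insert a t hat ih =>
    have has : a ∉ s := fun has => disjoint_left.1 h has (mem_insert_self a t)
    have h' := h.mono_right (subset_insert a t)
    rw [union_insert, sum_powerset_insert (by simp [has, hat]), ih h', ih h', ← sum_add_distrib]
    simp only [sum_powerset_insert hat, union_insert]

theorem sum_powerset_shapleyWeight {α : Type*} [DecidableEq α] (U : Finset α) {s t : ℕ}
    (hts : t < s) : ∑ W ∈ U.powerset, shapleyWeight (s + #U) (t + #W) = shapleyWeight s t := by
  induction U using Finset.induction_on with
  | empty => simp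
  | insert a U ha ih =>
    rw [sum_powerset_insert ha, ← ih, ← sum_add_distrib]
    refine sum_congr rfl fun W hW => ?_
    have hWU : W ⊆ U := mem_powerset.1 hW
    rw [card_insert_of_notMem ha, card_insert_of_notMem fun h => ha (hWU h), ← add_assoc,
      ← add_assoc]
    exact shapleyWeight_succ_add_shapleyWeight_succ (by have := card_le_card hWU; omega)

theorem sum_shapleyWeight_eq_of_inter {ι : Type*} [Fintype ι] [DecidableEq ι] {S : Finset ι}
    {i : ι} (hiS : i ∈ S) {g : Finset ι → ℝ} (hg : ∀ A, i ∈ A → g (A ∩ S) = g A) :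
    ∑ T ∈ S.powerset, (if i ∈ T then shapleyWeight #S (#T - 1) * g T else 0) =
      ∑ A : Finset ι, if i ∈ A then shapleyWeight (Fintype.card ι) (#A - 1) * g A else 0 := by
  rw [← powerset_univ, ← union_compl S, sum_powerset_union disjoint_compl_right,
    ← card_add_card_compl S]
  refine sum_congr rfl fun T hT => ?_
  have hTS : T ⊆ S := mem_powerset.1 hT
  by_cases hiT : i ∈ T
  · have hterm : ∀ W ∈ Sᶜ.powerset,
        (if i ∈ T ∪ W then shapleyWeight (#S + #Sᶜ) (#(T ∪ W) - 1) * g (T ∪ W) else 0) =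
          shapleyWeight (#S + #Sᶜ) (#T - 1 + #W) * g T := fun W hW => by
      have hWS : Disjoint W S := disjoint_compl_left.mono_left (mem_powerset.1 hW)
      have hTW : (T ∪ W) ∩ S = T := by
        rw [union_inter_distrib_right, inter_eq_left.2 hTS, disjoint_iff_inter_eq_empty.1 hWS,
          union_empty]
      rw [if_pos (mem_union_left W hiT), card_union_of_disjoint (hWS.symm.mono_left hTS),
        ← hg _ (mem_union_left W hiT), hTW, Nat.sub_add_comm (card_pos.2 ⟨i, hiT⟩)]
    rw [sum_congr rfl hterm, ← sum_mul, sum_powerset_shapleyWeight _ (by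
      have := card_le_card hTS; have := card_pos.2 ⟨i, hiT⟩; omega), if_pos hiT]
  · rw [if_neg hiT, eq_comm]
    refine sum_eq_zero fun W hW => if_neg fun hiTW => ?_
    exact (mem_union.1 hiTW).elim hiT fun hiW => mem_compl.1 (mem_powerset.1 hW hiW) hiS

section Marginal

variable {ι : Type*} [Fintype ι] [DecidableEq ι] {X : ι → Type*} [∀ j, Fintype (X j)]

noncomputable def marg (q : (∀ j, X j) → ℝ) (E : Finset ι) (x : ∀ j, X j) : ℝ :=
  ∑ x' : ∀ j, X j, if ∀ j ∈ E, x' j = x j then q x' else 0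

variable {q : (∀ j, X j) → ℝ}

theorem marg_pos (hq : ∀ x, 0 < q x) (E : Finset ι) (x : ∀ j, X j) : 0 < marg q E x :=
  sum_pos' (fun x' _ => by split_ifs <;> simp [(hq x').le]) ⟨x, mem_univ x, by simpa using hq x⟩

theorem marg_congr (E : Finset ι) {x x' : ∀ j, X j} (h : ∀ j ∈ E, x' j = x j) :
    marg q E x' = marg q E x :=
  sum_congr rfl fun z _ => if_congr (forall₂_congr fun j hj => by rw [h j hj]) rfl rfl

theorem sum_marg_union {D E : Finset ι} (hDE : Disjoint D E) (x : ∀ j, X j) :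
    ∑ x' with ∀ j ∉ D, x' j = x j, marg q (D ∪ E) x' = marg q E x := by
  have key : ∀ x' z : ∀ j, X j, ((∀ j ∉ D, x' j = x j) ∧ ∀ j ∈ D ∪ E, z j = x' j) ↔
      (x' = D.piecewise z x ∧ ∀ j ∈ E, z j = x j) := by
    intro x' z
    constructor
    · rintro ⟨hx, hz⟩
      refine ⟨funext fun j => ?_, fun j hj => ?_⟩
      · by_cases hj : j ∈ D <;> simp [hj, hx, hz]
      · rw [hz j (mem_union_right _ hj), hx j (disjoint_right.1 hDE hj)]
    · rintro ⟨rfl, hz⟩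
      refine ⟨fun j hj => by simp [hj], fun j hj => ?_⟩
      by_cases hjD : j ∈ D
      · simp [hjD]
      · simp [hjD, hz j ((mem_union.1 hj).resolve_left hjD)]
  calc ∑ x' with ∀ j ∉ D, x' j = x j, marg q (D ∪ E) x'
      = ∑ x' : ∀ j, X j, ∑ z : ∀ j, X j,
          if (∀ j ∉ D, x' j = x j) ∧ ∀ j ∈ D ∪ E, z j = x' j then q z else 0 := by
        simp only [marg, sum_filter, ite_and, sum_ite_irrel, sum_const_zero]
    _ = ∑ z : ∀ j, X j, ∑ x' : ∀ j, X j,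
          if x' = D.piecewise z x ∧ ∀ j ∈ E, z j = x j then q z else 0 := by
        rw [sum_comm]
        simp only [key]
    _ = marg q E x := by simp only [ite_and, sum_ite_eq', mem_univ, if_true, marg]

/-- `X_A ⊥ X_B | X_C` under the (unnormalised) mass function `q`, in product form. -/
def MargCondIndep (q : (∀ j, X j) → ℝ) (A B C : Finset ι) : Prop :=
  ∀ x, marg q (A ∪ B ∪ C) x * marg q C x = marg q (A ∪ C) x * marg q (B ∪ C) x

theorem MargCondIndep.mono_right {A B B' C : Finset ι} (h : MargCondIndep q A B C)
    (hB : B' ⊆ B) (hdisj : Disjoint B (A ∪ C)) : MargCondIndep q A B' C := by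
  intro x
  have hD : Disjoint (B \ B') (A ∪ C) := hdisj.mono_left sdiff_subset
  have hfix : ∀ E ⊆ A ∪ C, ∀ x' ∈ ({x' | ∀ j ∉ B \ B', x' j = x j} : Finset (∀ j, X j)),
      marg q E x' = marg q E x := fun E hE x' hx' =>
    marg_congr E fun j hj => (mem_filter.1 hx').2 j (disjoint_right.1 hD (hE hj))
  have hD' : ∀ E ⊆ A ∪ C, Disjoint (B \ B') (E ∪ B') := fun E hE =>
    disjoint_union_right.2 ⟨hD.mono_right hE, sdiff_disjoint⟩
  have hunion : ∀ E, B \ B' ∪ (E ∪ B') = E ∪ B := fun E => by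
    rw [← union_assoc, union_comm (B \ B'), union_assoc, sdiff_union_of_subset hB]
  calc marg q (A ∪ B' ∪ C) x * marg q C x
      = ∑ x' with ∀ j ∉ B \ B', x' j = x j, marg q (A ∪ B ∪ C) x' * marg q C x' := by
        rw [union_right_comm A B', ← sum_marg_union (hD' (A ∪ C) subset_rfl) x, sum_mul, hunion,
          union_right_comm]
        exact sum_congr rfl fun x' hx' => by rw [hfix C subset_union_right x' hx']
    _ = ∑ x' with ∀ j ∉ B \ B', x' j = x j, marg q (A ∪ C) x' * marg q (B ∪ C) x' :=
        sum_congr rfl fun x' _ => h x'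
    _ = marg q (A ∪ C) x * marg q (B' ∪ C) x := by
        rw [union_comm B' C, ← sum_marg_union (hD' C subset_union_right) x, mul_sum, hunion,
          union_comm C]
        exact sum_congr rfl fun x' hx' => by rw [hfix (A ∪ C) subset_rfl x' hx']

end Marginal

theorem margXY_eq_marg {Y : Type*} (p : (∀ j, 𝒳 j) → Y → ℝ) (E : Finset (Fin d))
    (x : ∀ j, 𝒳 j) (y : Y) : margXY p E x y = marg (p · y) E x := by
  simp only [margXY, marg]

section FeatureAttribution

variable {p : (∀ j, 𝒳 j) → 𝒴 → ℝ}

theorem margX_eq_marg (E : Finset (Fin d)) (x : ∀ j, 𝒳 j) :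
    margX p E x = marg (pX p) E x := by
  rw [margX]
  simp only [margXY_eq_marg, marg, pX]
  rw [sum_comm]
  simp only [sum_ite_irrel, sum_const_zero]
  -- the two sides differ only in their `Decidable` instances
  congr! 2

theorem condY_pos (hpos : ∀ x y, 0 < p x y) (E : Finset (Fin d)) (x : ∀ j, 𝒳 j) (y : 𝒴) :
    0 < condY p E x y := by
  rw [condY, margXY_eq_marg, margX_eq_marg]
  refine div_pos (marg_pos (fun x' => hpos x' y) E x) ?_
  exact marg_pos (fun x' => sum_pos (fun y _ => hpos x' y) ⟨y, mem_univ y⟩) E x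

theorem margContrib_union_eq_of_margCondIndep (hpos : ∀ x y, 0 < p x y) {i : Fin d}
    {W T : Finset (Fin d)} (hiW : i ∉ W) (hiT : i ∉ T)
    (hXY : ∀ y, MargCondIndep (p · y) {i} W T) (hX : MargCondIndep (pX p) {i} W T)
    (x : ∀ j, 𝒳 j) : margContrib p x ({i} ∪ W ∪ T) i = margContrib p x ({i} ∪ T) i := by
  have hIWT : ({i} ∪ W ∪ T).erase i = W ∪ T := by
    rw [union_assoc, ← insert_eq, erase_insert (by simp [hiW, hiT])]
  have hIT : ({i} ∪ T).erase i = T := by rw [← insert_eq, erase_insert hiT]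
  simp only [margContrib, impScore, hIWT, hIT, ← sum_sub_distrib, ← mul_sub]
  refine sum_congr rfl fun y _ => congrArg _ ?_
  have hprod : condY p ({i} ∪ W ∪ T) x y * condY p T x y =
      condY p ({i} ∪ T) x y * condY p (W ∪ T) x y := by
    simp only [condY, div_mul_div_comm, margXY_eq_marg, margX_eq_marg, hXY y x, hX x]
  have hlog := congrArg Real.log hprod
  simp only [Real.log_mul (condY_pos hpos _ x y).ne' (condY_pos hpos _ x y).ne'] at hlog
  linarith

theorem margContrib_inter_eq (hpos : ∀ x y, 0 < p x y) {i : Fin d} {S : Finset (Fin d)}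
    (hiS : i ∈ S) (hXY : ∀ T ⊆ S.erase i, ∀ y, MargCondIndep (p · y) {i} (univ \ S) T)
    (hX : ∀ T ⊆ S.erase i, MargCondIndep (pX p) {i} (univ \ S) T) {A : Finset (Fin d)}
    (hiA : i ∈ A) (x : ∀ j, 𝒳 j) : margContrib p x (A ∩ S) i = margContrib p x A i := by
  set T := (A ∩ S).erase i
  have hT : T ⊆ S.erase i := erase_subset_erase i inter_subset_right
  have hW : A \ S ⊆ univ \ S := sdiff_subset_sdiff (subset_univ A) subset_rfl
  have hdisj : Disjoint (univ \ S) ({i} ∪ T) := sdiff_disjoint.mono_right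
    (union_subset (singleton_subset_iff.2 hiS) (hT.trans (erase_subset i S)))
  have hAS : {i} ∪ T = A ∩ S := by rw [← insert_eq, insert_erase (mem_inter.2 ⟨hiA, hiS⟩)]
  have hA : {i} ∪ A \ S ∪ T = A := by rw [union_right_comm, hAS, union_comm, sdiff_union_inter]
  have key := margContrib_union_eq_of_margCondIndep hpos (by simp [hiS]) (notMem_erase i _)
    (fun y => (hXY T hT y).mono_right hW hdisj) ((hX T hT).mono_right hW hdisj) x
  rwa [hA, hAS, eq_comm] at key

theorem shapley_eq_sum_shapleyWeight (x : ∀ j, 𝒳 j) (i : Fin d) :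
    shapley p x i = ∑ A, if i ∈ A then shapleyWeight d (#A - 1) * margContrib p x A i else 0 := by
  rw [shapley, mul_sum]
  refine sum_congr rfl fun A _ => ?_
  split_ifs
  · rw [shapleyWeight]; ring
  · rw [mul_zero]

theorem shapleyRes_eq_sum_shapleyWeight (x : ∀ j, 𝒳 j) (S : Finset (Fin d)) (i : Fin d) :
    shapleyRes p x S i =
      ∑ T ∈ S.powerset, if i ∈ T then shapleyWeight #S (#T - 1) * margContrib p x T i else 0 := by
  rw [shapleyRes, mul_sum]
  refine sum_congr rfl fun T _ => ?_
  split_ifs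
  · rw [shapleyWeight]; ring
  · rw [mul_zero]

end FeatureAttribution

theorem restricted_shapley_exact_general (p : (∀ j, 𝒳 j) → 𝒴 → ℝ)
    (hpos : ∀ x y, 0 < p x y)
    (i : Fin d) (S : Finset (Fin d)) (hiS : i ∈ S)
    (hCI : ∀ T ⊆ S.erase i,
      (∀ x : ∀ j, 𝒳 j, ∀ y : 𝒴,
        margXY p ({i} ∪ (Finset.univ \ S) ∪ T) x y * margXY p T x y
          = margXY p ({i} ∪ T) x y * margXY p ((Finset.univ \ S) ∪ T) x y) ∧
      (∀ x : ∀ j, 𝒳 j,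
        margX p ({i} ∪ (Finset.univ \ S) ∪ T) x * margX p T x
          = margX p ({i} ∪ T) x * margX p ((Finset.univ \ S) ∪ T) x)) :
    ∀ x : ∀ j, 𝒳 j, shapleyRes p x S i = shapley p x i := by
  intro x
  have hinter : ∀ A, i ∈ A → margContrib p x (A ∩ S) i = margContrib p x A i := fun A hiA =>
    margContrib_inter_eq hpos hiS
      (fun T hT y x => by simpa only [margXY_eq_marg] using (hCI T hT).1 x y)
      (fun T hT => by simpa only [MargCondIndep, margX_eq_marg] using (hCI T hT).2) hiA x
  rw [shapleyRes_eq_sum_shapleyWeight, shapley_eq_sum_shapleyWeight,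
    sum_shapleyWeight_eq_of_inter (g := fun A => margContrib p x A i) hiS hinter, Fintype.card_fin]

/-- Exactness case of Theorem 1: if for every `T ⊆ S \ {i}` the feature `X_i` is
conditionally independent of `X_{[d] \ S}` given `X_T`, and also given `(X_T, Y)`,
then the restricted Shapley estimate equals the Shapley value at every point. -/
theorem restricted_shapley_exact (p : (∀ j, 𝒳 j) → 𝒴 → ℝ)
    (hpos : ∀ x y, 0 < p x y)
    (hsum : ∑ x : ∀ j, 𝒳 j, ∑ y, p x y = 1)
    (i : Fin d) (S : Finset (Fin d)) (hiS : i ∈ S)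
    (hCI : ∀ T ⊆ S.erase i,
      (∀ x : ∀ j, 𝒳 j, ∀ y : 𝒴,
        margXY p ({i} ∪ (Finset.univ \ S) ∪ T) x y * margXY p T x y
          = margXY p ({i} ∪ T) x y * margXY p ((Finset.univ \ S) ∪ T) x y) ∧
      (∀ x : ∀ j, 𝒳 j,
        margX p ({i} ∪ (Finset.univ \ S) ∪ T) x * margX p T x
          = margX p ({i} ∪ T) x * margX p ((Finset.univ \ S) ∪ T) x)) :
    ∀ x : ∀ j, 𝒳 j, shapleyRes p x S i = shapley p x i :=
  restricted_shapley_exact_general p hpos i S hiS hCI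
end

section
/- Let G be a finite graph on vertex set V, and let v be a real-valued set function on subsets of V that is decomposable over connected components: for every subset S ⊆ V, v(S) = ∑_{T ∈ C_G(S)} v(T), where C_G(S) is the set of connected components of the subgraph of G induced by S (in particular v(∅) = 0). Then for every vertex i and every subset A ⊆ V with i ∈ A, the marginal contribution of i to A depends only on the connected component of i in A: writing U for the connected component of the induced subgraph on A that contains i, one has v(A) − v(A \ {i}) = v(U) − v(U \ {i}). -/
open scoped Classical

/-- `a` and `b` are connected within `S`: there is a walk in `G` from `a` to `b`
all of whose vertices lie in `S`. -/
def ReachIn {V : Type*} (G : SimpleGraph V) (S : Finset V) (a b : V) : Prop :=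
  ∃ w : G.Walk a b, ∀ v ∈ w.support, v ∈ S

/-- The connected component (as a subset of `S`) of the subgraph of `G` induced
by `S` that contains `a` (empty if `a ∉ S`). -/
noncomputable def compIn {V : Type*} [DecidableEq V] (G : SimpleGraph V)
    (S : Finset V) (a : V) : Finset V :=
  S.filter fun b => ReachIn G S a b

/-!
Removing `i` from `A` only splits the component `U` of `i`: the components of `A \ {i}` are
the components of `A` other than `U`, together with the components of `U \ {i}`. By
decomposability, `v A` and `v (A \ {i})` therefore share every summand except `v U`, resp.
`v (U \ {i})`.
-/

namespace ReachIn

variable {V : Type*} {G : SimpleGraph V} {S T : Finset V} {a b c : V}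

theorem refl (h : a ∈ S) : ReachIn G S a a :=
  ⟨.nil, by simpa using h⟩

theorem symm (h : ReachIn G S a b) : ReachIn G S b a := by
  obtain ⟨w, hw⟩ := h
  exact ⟨w.reverse, by simpa using hw⟩

theorem trans (hab : ReachIn G S a b) (hbc : ReachIn G S b c) : ReachIn G S a c := by
  obtain ⟨w₁, hw₁⟩ := hab
  obtain ⟨w₂, hw₂⟩ := hbc
  refine ⟨w₁.append w₂, fun x hx => ?_⟩
  rcases (SimpleGraph.Walk.mem_support_append_iff _ _).1 hx with hx | hx
  exacts [hw₁ x hx, hw₂ x hx]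

theorem mono (hST : S ⊆ T) (h : ReachIn G S a b) : ReachIn G T a b := by
  obtain ⟨w, hw⟩ := h
  exact ⟨w, fun x hx => hST (hw x hx)⟩

theorem mem_right (h : ReachIn G S a b) : b ∈ S := by
  obtain ⟨w, hw⟩ := h
  exact hw b w.end_mem_support

theorem of_mem_support (w : G.Walk a b) (hw : ∀ x ∈ w.support, x ∈ S) (hc : c ∈ w.support) :
    ReachIn G S a c :=
  ⟨w.takeUntil c hc, fun x hx => hw x (w.support_takeUntil_subset_support hc hx)⟩

end ReachIn

section compIn

variable {V : Type*} [DecidableEq V] {G : SimpleGraph V} {S A : Finset V} {a b i : V}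

theorem mem_compIn : b ∈ compIn G S a ↔ ReachIn G S a b :=
  Finset.mem_filter.trans ⟨And.right, fun h => ⟨h.mem_right, h⟩⟩

theorem compIn_subset : compIn G S a ⊆ S :=
  Finset.filter_subset _ _

theorem mem_compIn_self (h : a ∈ S) : a ∈ compIn G S a :=
  mem_compIn.2 (.refl h)

theorem compIn_eq_of_reachIn (h : ReachIn G S a b) : compIn G S a = compIn G S b := by
  ext x
  simp only [mem_compIn]
  exact ⟨h.symm.trans, h.trans⟩

theorem compIn_erase_of_not_reachIn (h : ¬ReachIn G A i a) :
    compIn G (A.erase i) a = compIn G A a := by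
  ext b
  simp only [mem_compIn]
  refine ⟨.mono (A.erase_subset i), fun ⟨w, hw⟩ => ⟨w, fun x hx => ?_⟩⟩
  have hxi : x ≠ i := by
    rintro rfl
    exact h (ReachIn.of_mem_support w hw hx).symm
  exact Finset.mem_erase.2 ⟨hxi, hw x hx⟩

theorem compIn_erase_of_reachIn (h : ReachIn G A i a) :
    compIn G (A.erase i) a = compIn G ((compIn G A i).erase i) a := by
  ext b
  simp only [mem_compIn]
  refine ⟨fun ⟨w, hw⟩ => ⟨w, fun x hx => ?_⟩,
    .mono (Finset.erase_subset_erase i compIn_subset)⟩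
  have hax : ReachIn G A a x := (ReachIn.of_mem_support w hw hx).mono (A.erase_subset i)
  exact Finset.mem_erase.2 ⟨(Finset.mem_erase.1 (hw x hx)).1, mem_compIn.2 (h.trans hax)⟩

end compIn

section components

variable {V : Type*} [DecidableEq V] (G : SimpleGraph V) {A : Finset V} {i : V}

noncomputable def components (S : Finset V) : Finset (Finset V) :=
  S.image (compIn G S)

theorem components_erase (hi : i ∈ A) :
    components G (A.erase i) =
      (components G A).erase (compIn G A i) ∪ components G ((compIn G A i).erase i) := by
  ext T
  simp only [components, Finset.mem_union, Finset.mem_erase, Finset.mem_image]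
  constructor
  · rintro ⟨a, ⟨hai, ha⟩, rfl⟩
    by_cases hia : ReachIn G A i a
    · exact .inr ⟨a, ⟨hai, mem_compIn.2 hia⟩, (compIn_erase_of_reachIn hia).symm⟩
    · rw [compIn_erase_of_not_reachIn hia]
      refine .inl ⟨fun hU => hia (mem_compIn.1 ?_), a, ha, rfl⟩
      exact hU ▸ mem_compIn_self ha
  · rintro (⟨hne, a, ha, rfl⟩ | ⟨a, ⟨hai, haU⟩, rfl⟩)
    · have hia : ¬ReachIn G A i a := fun hia => hne (compIn_eq_of_reachIn hia).symm
      have hai : a ≠ i := by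
        rintro rfl
        exact hia (.refl hi)
      exact ⟨a, ⟨hai, ha⟩, compIn_erase_of_not_reachIn hia⟩
    · exact ⟨a, ⟨hai, compIn_subset haU⟩, compIn_erase_of_reachIn (mem_compIn.1 haU)⟩

theorem disjoint_components_erase_components_compIn_erase :
    Disjoint ((components G A).erase (compIn G A i))
      (components G ((compIn G A i).erase i)) := by
  rw [Finset.disjoint_left]
  intro T hT hT'
  obtain ⟨b, -, rfl⟩ := Finset.mem_image.1 hT'
  obtain ⟨hne, a, ha, hTa⟩ := by
    simpa only [components, Finset.mem_erase, Finset.mem_image] using hT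
  have haU : a ∈ compIn G A i :=
    Finset.mem_of_mem_erase (compIn_subset (hTa ▸ mem_compIn_self ha))
  exact hne (hTa ▸ compIn_eq_of_reachIn (mem_compIn.1 haU)).symm

end components

theorem marginal_contribution_component_general {V : Type*} [DecidableEq V]
    (G : SimpleGraph V) (v : Finset V → ℝ)
    (hdec : ∀ S : Finset V, v S = ∑ T ∈ S.image (fun a => compIn G S a), v T)
    (i : V) (A : Finset V) (hiA : i ∈ A) :
    v A - v (A.erase i) = v (compIn G A i) - v ((compIn G A i).erase i) := by
  set U := compIn G A i
  have hdec' (S : Finset V) : v S = ∑ T ∈ components G S, v T := hdec S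
  have hU : U ∈ components G A := Finset.mem_image_of_mem _ hiA
  have hvA : v A = ∑ T ∈ (components G A).erase U, v T + v U := by
    rw [hdec' A, Finset.sum_erase_add _ _ hU]
  have hvAi : v (A.erase i) = ∑ T ∈ (components G A).erase U, v T + v (U.erase i) := by
    rw [hdec' (A.erase i), components_erase G hiA,
      Finset.sum_union (disjoint_components_erase_components_compIn_erase G), ← hdec']
  rw [hvA, hvAi]
  ring

/-- For a set function `v` that is decomposable over connected components of induced
subgraphs (so in particular `v(∅) = 0`), the marginal contribution of a vertex `i` to
a subset `A ∋ i` depends only on the connected component of `i` in `A`: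
`v(A) − v(A \ {i}) = v(U) − v(U \ {i})` where `U` is the component of `i` in `A`. -/
theorem marginal_contribution_component {V : Type*} [Fintype V] [DecidableEq V]
    (G : SimpleGraph V) (v : Finset V → ℝ)
    (hdec : ∀ S : Finset V, v S = ∑ T ∈ S.image (fun a => compIn G S a), v T)
    (i : V) (A : Finset V) (hiA : i ∈ A) :
    v A - v (A.erase i) = v (compIn G A i) - v ((compIn G A i).erase i) :=
  marginal_contribution_component_general G v hdec i A hiA
end
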